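/- Let X be a Banach space and let F ⊂ X* be a norm-bounded set having property (*). Then F is a relative boundary: whenever x ∈ X satisfies sup{f(x) : f ∈ F} = 1, there exists f_x ∈ F with f_x(x) = 1. -/

import Mathlib

/-!
Suppose `sup_{f ∈ F} f x = 1` is not attained. By Banach–Alaoglu the bounded set `F` lies in a
weak-* compact ball, so the functionals `f ∈ F` with `f x` close to `1` cluster at some `g` with
`g x = 1`. Every weak-* neighbourhood of `g` contains infinitely many points of `F`: finitely many
values `f x < 1` stay away from `1`. Hence `g` is a weak-* limit point of `F` with `g x = 1`,
contradicting property (*).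
-/

open NormedSpace Filter Set Topology Pointwise

noncomputable section

/-- `g` is a weak-* limit point of `F`: every weak-* neighbourhood of `g`
contains infinitely many points of `F`. -/
def IsWeakStarLimitPoint {X : Type*} [NormedAddCommGroup X] [NormedSpace ℝ X]
    (F : Set (StrongDual ℝ X)) (g : StrongDual ℝ X) : Prop :=
  ∀ U : Set (WeakDual ℝ X), IsOpen U → StrongDual.toWeakDual g ∈ U →
    {f : StrongDual ℝ X | f ∈ F ∧ StrongDual.toWeakDual f ∈ U}.Infinite

/-- Property (*) of a set of functionals. -/
def PropertyStar {X : Type*} [NormedAddCommGroup X] [NormedSpace ℝ X]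
    (F : Set (StrongDual ℝ X)) : Prop :=
  ∀ g : StrongDual ℝ X, IsWeakStarLimitPoint F g →
    ∀ x : X, sSup ((fun f : StrongDual ℝ X => f x) '' F) = 1 → g x < 1

/-- `F` is a relative boundary. -/
def IsRelativeBoundary {X : Type*} [NormedAddCommGroup X] [NormedSpace ℝ X]
    (F : Set (StrongDual ℝ X)) : Prop :=
  ∀ x : X, sSup ((fun f : StrongDual ℝ X => f x) '' F) = 1 → ∃ f ∈ F, f x = 1

theorem IsCompact.exists_forall_nhds_infinite_inter_of_mem_closure_image
    {Y Z : Type*} [TopologicalSpace Y] [TopologicalSpace Z] [T2Space Z]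
    {K S : Set Y} (hK : IsCompact K) (hSK : S ⊆ K) {φ : Y → Z} (hφ : Continuous φ) {a : Z}
    (ha : a ∈ closure (φ '' S)) (haS : a ∉ φ '' S) :
    ∃ y ∈ K, φ y = a ∧ ∀ U ∈ 𝓝 y, (U ∩ S).Infinite := by
  set l := comap φ (𝓝[φ '' S] a) ⊓ 𝓟 S
  have : l.NeBot :=
    comap_inf_principal_neBot_of_image_mem (mem_closure_iff_nhdsWithin_neBot.mp ha)
      self_mem_nhdsWithin
  obtain ⟨y, hyK, hy⟩ := hK.exists_clusterPt (f := l) (inf_le_right.trans (principal_mono.mpr hSK))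
  have hφl : Tendsto φ l (𝓝 a) :=
    (tendsto_comap.mono_right nhdsWithin_le_nhds).mono_left inf_le_left
  refine ⟨y, hyK, eq_of_nhds_neBot (hy.map hφ.continuousAt hφl), fun U hU hfin => ?_⟩
  have hW : (φ '' (U ∩ S))ᶜ ∈ 𝓝 a :=
    (hfin.image φ).isClosed.isOpen_compl.mem_nhds fun h => haS (image_mono inter_subset_right h)
  obtain ⟨z, hzU, hzW, hzS⟩ := ((hy.frequently hU).and_eventually
    ((hφl.eventually hW).and (mem_inf_of_right (mem_principal_self S)))).exists
  exact hzW ⟨z, ⟨hzU, hzS⟩, rfl⟩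

section Dual

variable {X : Type*} [NormedAddCommGroup X] [NormedSpace ℝ X]

theorem isWeakStarLimitPoint_toStrongDual {F : Set (StrongDual ℝ X)} {g : WeakDual ℝ X}
    (hg : ∀ U ∈ 𝓝 g, (U ∩ StrongDual.toWeakDual '' F).Infinite) :
    IsWeakStarLimitPoint F (WeakDual.toStrongDual g) := by
  intro U hU hgU
  refine ((hg U (hU.mem_nhds hgU)).image WeakDual.toStrongDual.injective.injOn).mono ?_
  rintro _ ⟨_, ⟨hfU, f, hf, rfl⟩, rfl⟩
  exact ⟨hf, hfU⟩

theorem bddAbove_image_apply {F : Set (StrongDual ℝ X)} (hF : Bornology.IsBounded F) (x : X) :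
    BddAbove ((fun f : StrongDual ℝ X => f x) '' F) :=
  ((ContinuousLinearMap.apply ℝ ℝ x).lipschitz.isBounded_image hF).bddAbove

end Dual

theorem stmt11 {X : Type*} [NormedAddCommGroup X] [NormedSpace ℝ X]
    (F : Set (StrongDual ℝ X)) (hbdd : Bornology.IsBounded F)
    (hstar : PropertyStar F) :
    IsRelativeBoundary F := by
  intro x hsup
  by_contra hne
  have hF : F.Nonempty := nonempty_iff_ne_empty.mpr fun h => by simp [h] at hsup
  have hclosure : (1 : ℝ) ∈ closure ((fun f : StrongDual ℝ X => f x) '' F) :=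
    hsup ▸ csSup_mem_closure (hF.image _) (bddAbove_image_apply hbdd x)
  obtain ⟨r, hr⟩ := hbdd.subset_closedBall 0
  obtain ⟨g, -, hgx, hg⟩ :=
    (WeakDual.isCompact_closedBall 0 r).exists_forall_nhds_infinite_inter_of_mem_closure_image
      (S := StrongDual.toWeakDual '' F) (image_subset_iff.mpr hr) (WeakDual.eval_continuous x)
      (by rwa [image_image]) (by rwa [image_image])
  exact (hstar _ (isWeakStarLimitPoint_toStrongDual hg) x hsup).ne hgx
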